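/- For Hoeffding's exponent φ_H(z, μ, θ) with 0 < z < μ < 1, the partial derivative with respect to μ is ≥ 0, and the partial derivative with respect to θ is ≤ 0 for θ ∈ (0, 1). -/

import Mathlib

noncomputable def phiH (z ν θ : ℝ) : ℝ :=
  (1 - z * ν / (ν ^ 2 + θ)) * Real.log ((θ + ν * (ν - z)) / θ) +
    (z * ν / (ν ^ 2 + θ)) * Real.log (z / ν)

/-!
Write `φ_H = log A − w · L` with `A = (θ + μ(μ − z))/θ`, weight `w = zμ/(μ² + θ)` and
`L = log A − log (z/μ)`. Since `Aμ/z = 1 + (μ − z)(μ² + θ)/(θz)`, the bound `log x ≤ x − 1` gives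
`0 ≤ zθ L ≤ (μ − z)(μ² + θ)`. Both partial derivatives are explicit in `L`, and this single
inequality fixes their signs.
-/

open Real

noncomputable def phiHLogGap (z ν θ : ℝ) : ℝ :=
  log ((θ + ν * (ν - z)) / θ) - log (z / ν)

section

variable {z ν θ : ℝ}

theorem phiHLogGap_eq (hz : 0 < z) (hzν : z ≤ ν) (hθ : 0 < θ) :
    phiHLogGap z ν θ = log (1 + (ν - z) * (ν ^ 2 + θ) / (θ * z)) := by
  have hν : 0 < ν := hz.trans_le hzν
  have hN : 0 < θ + ν * (ν - z) := by nlinarith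
  rw [phiHLogGap, ← log_div (by positivity) (by positivity)]
  congr 1
  field_simp
  ring

theorem phiHLogGap_nonneg (hz : 0 < z) (hzν : z ≤ ν) (hθ : 0 < θ) : 0 ≤ phiHLogGap z ν θ := by
  rw [phiHLogGap_eq hz hzν hθ]
  apply log_nonneg
  have : 0 ≤ (ν - z) * (ν ^ 2 + θ) / (θ * z) := by
    have := sub_nonneg.mpr hzν
    positivity
  linarith

theorem mul_phiHLogGap_le (hz : 0 < z) (hzν : z ≤ ν) (hθ : 0 < θ) :
    z * θ * phiHLogGap z ν θ ≤ (ν - z) * (ν ^ 2 + θ) := by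
  have hgap : phiHLogGap z ν θ ≤ (ν - z) * (ν ^ 2 + θ) / (θ * z) := by
    rw [phiHLogGap_eq hz hzν hθ]
    have hr : 0 ≤ (ν - z) * (ν ^ 2 + θ) / (θ * z) := by
      have := sub_nonneg.mpr hzν
      positivity
    linarith [log_le_sub_one_of_pos (by linarith : 0 < 1 + (ν - z) * (ν ^ 2 + θ) / (θ * z))]
  calc z * θ * phiHLogGap z ν θ ≤ z * θ * ((ν - z) * (ν ^ 2 + θ) / (θ * z)) := by
        gcongr
    _ = (ν - z) * (ν ^ 2 + θ) := by field_simp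

theorem hasDerivAt_phiH_left (hz : 0 < z) (hzν : z < ν) (hθ : 0 < θ) :
    HasDerivAt (fun x => phiH z x θ)
      ((2 * (ν - z) * (ν ^ 2 + θ) - z * (θ - ν ^ 2) * phiHLogGap z ν θ) / (ν ^ 2 + θ) ^ 2) ν := by
  have hν : 0 < ν := hz.trans hzν
  have hN : 0 < θ + ν * (ν - z) := by nlinarith
  have hD : 0 < ν ^ 2 + θ := by positivity
  have hA : HasDerivAt (fun x => log ((θ + x * (x - z)) / θ))
      ((2 * ν - z) / (θ + ν * (ν - z))) ν :=
    (((hasDerivAt_id' ν).fun_mul ((hasDerivAt_id' ν).sub_const z)).const_add θ |>.div_const θ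
      |>.log (by positivity)).congr_deriv (by field_simp; ring)
  have hB : HasDerivAt (fun x => log (z / x)) (-ν⁻¹) ν :=
    ((hasDerivAt_const ν z).fun_div (hasDerivAt_id' ν) hν.ne' |>.log (by positivity)).congr_deriv
      (by field_simp; ring)
  have hw : HasDerivAt (fun x => z * x / (x ^ 2 + θ)) (z * (θ - ν ^ 2) / (ν ^ 2 + θ) ^ 2) ν :=
    ((hasDerivAt_id' ν).const_mul z |>.fun_div ((hasDerivAt_pow 2 ν).add_const θ) hD.ne'
      |>.congr_deriv (by field_simp; ring))
  exact (((hw.const_sub 1).fun_mul hA).add (hw.fun_mul hB)).congr_deriv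
    (by rw [phiHLogGap]; field_simp; ring)

theorem hasDerivAt_phiH_right (hz : 0 < z) (hzν : z < ν) (hθ : 0 < θ) :
    HasDerivAt (fun t => phiH z ν t)
      ((z * ν * θ * phiHLogGap z ν θ - ν * (ν - z) * (ν ^ 2 + θ)) / ((ν ^ 2 + θ) ^ 2 * θ)) θ := by
  have hN : 0 < θ + ν * (ν - z) := by nlinarith
  have hD : 0 < ν ^ 2 + θ := by positivity
  have hA : HasDerivAt (fun t => log ((t + ν * (ν - z)) / t))
      (1 / (θ + ν * (ν - z)) - 1 / θ) θ :=
    (((hasDerivAt_id' θ).add_const (ν * (ν - z))).fun_div (hasDerivAt_id' θ) hθ.ne'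
      |>.log (by positivity)).congr_deriv (by field_simp)
  have hw : HasDerivAt (fun t => z * ν / (ν ^ 2 + t)) (-(z * ν) / (ν ^ 2 + θ) ^ 2) θ :=
    ((hasDerivAt_const θ (z * ν)).fun_div ((hasDerivAt_id' θ).const_add (ν ^ 2)) hD.ne'
      |>.congr_deriv (by ring))
  have hB := hasDerivAt_const θ (log (z / ν))
  exact (((hw.const_sub 1).fun_mul hA).add (hw.fun_mul hB)).congr_deriv
    (by rw [phiHLogGap]; field_simp; ring)

end

theorem phiH_deriv_signs (z μ θ : ℝ) (hz : 0 < z) (hzμ : z < μ)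
    (hθ0 : 0 < θ) :
    0 ≤ deriv (fun ν : ℝ => phiH z ν θ) μ ∧ deriv (fun t : ℝ => phiH z μ t) θ ≤ 0 := by
  have hμ : 0 < μ := hz.trans hzμ
  have hgap := phiHLogGap_nonneg hz hzμ.le hθ0
  have hbound := mul_phiHLogGap_le hz hzμ.le hθ0
  rw [(hasDerivAt_phiH_left hz hzμ hθ0).deriv, (hasDerivAt_phiH_right hz hzμ hθ0).deriv]
  constructor
  · apply div_nonneg _ (by positivity)
    have hpos : 0 ≤ (μ - z) * (μ ^ 2 + θ) := by nlinarith
    nlinarith [mul_nonneg (mul_nonneg hz.le (sq_nonneg μ)) hgap]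
  · apply div_nonpos_of_nonpos_of_nonneg _ (by positivity)
    nlinarith [mul_le_mul_of_nonneg_left hbound hμ.le]
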